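/- arXiv:1302.6021 — 2 statements merged into one kernel-verified Lean document; each statement's English description precedes it below -/
import Mathlib

section
/- Let k ≥ 1 and define c(k) = 1/2 + (k/√(4k²-1))·coth((k/2)·√((2k+1)/(2k-1))). Then 1/c(k) = 1 - 1/(16k²) + O(1/k⁴) as k → ∞; in particular there exists a constant C such that |1/c(k) - 1 + 1/(16k²)| ≤ C/k⁴ for all k ≥ 1. -/
/-- `c(k) = 1/2 + (k/√(4k²-1))·coth((k/2)·√((2k+1)/(2k-1)))`. -/
noncomputable def propBound (k : ℕ) : ℝ :=
  1 / 2 + (k : ℝ) / Real.sqrt (4 * (k : ℝ) ^ 2 - 1) *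
    (Real.cosh ((k : ℝ) / 2 * Real.sqrt ((2 * (k : ℝ) + 1) / (2 * (k : ℝ) - 1))) /
     Real.sinh ((k : ℝ) / 2 * Real.sqrt ((2 * (k : ℝ) + 1) / (2 * (k : ℝ) - 1))))

/-!
Write `c(k) = 1/2 + t · coth x` with `t = k/√(4k²-1)` and `x = (k/2)·√((2k+1)/(2k-1)) ≥ k/2`.
Squaring shows `1/2 + 1/(16k²) ≤ t ≤ 1/2 + 1/(16k²) + 1/(32k⁴)`, while
`1 ≤ coth x ≤ 1 + 4e^{-2x} ≤ 1 + 4e^{-k}` is exponentially close to `1`. Hence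
`1 + a ≤ c(k) ≤ 1 + a + O(k⁻⁴)` with `a = 1/(16k²)`, and inverting costs only `a² = O(k⁻⁴)`.
-/

open Real Nat

lemma exp_neg_le_factorial_div_pow {x : ℝ} (hx : 0 < x) (n : ℕ) : exp (-x) ≤ n ! / x ^ n := by
  rw [exp_neg, inv_le_comm₀ (exp_pos x) (by positivity), inv_div]
  exact pow_div_factorial_le_exp x hx.le n

lemma one_le_cosh_div_sinh {x : ℝ} (hx : 0 < x) : 1 ≤ cosh x / sinh x := by
  rw [one_le_div (sinh_pos_iff.mpr hx)]
  exact (sinh_lt_cosh x).le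

lemma cosh_div_sinh_le {x : ℝ} (hx : 1 / 2 ≤ x) : cosh x / sinh x ≤ 1 + 4 * exp (-(2 * x)) := by
  have hy : 2 ≤ exp (2 * x) := by
    calc (2 : ℝ) ≤ 1 + 1 := by norm_num
      _ ≤ exp 1 := add_one_le_exp 1
      _ ≤ exp (2 * x) := exp_le_exp.mpr (by linarith)
  have hcoth : cosh x / sinh x = (exp (2 * x) + 1) / (exp (2 * x) - 1) := by
    rw [cosh_eq, sinh_eq, two_mul, exp_add, exp_neg]
    field_simp
  rw [hcoth, exp_neg, div_le_iff₀ (by linarith)]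
  field_simp
  nlinarith

lemma one_half_add_le_div_sqrt_four_mul_sq_sub_one {K : ℝ} (hK : 1 ≤ K) :
    1 / 2 + 1 / (16 * K ^ 2) ≤ K / √(4 * K ^ 2 - 1) := by
  have h : 0 < 4 * K ^ 2 - 1 := by nlinarith
  rw [le_div_iff₀ (sqrt_pos.mpr h), ← le_div_iff₀' (by positivity), sqrt_le_left (by positivity),
    div_pow, le_div_iff₀ (by positivity)]
  field_simp
  nlinarith [pow_pos (show (0 : ℝ) < K by linarith) 2]

lemma div_sqrt_four_mul_sq_sub_one_le {K : ℝ} (hK : 1 ≤ K) :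
    K / √(4 * K ^ 2 - 1) ≤ 1 / 2 + 1 / (16 * K ^ 2) + 1 / (32 * K ^ 4) := by
  have h : 0 < 4 * K ^ 2 - 1 := by nlinarith
  rw [div_le_iff₀ (sqrt_pos.mpr h), ← div_le_iff₀' (by positivity), le_sqrt (by positivity) h.le,
    div_pow, div_le_iff₀ (by positivity)]
  field_simp
  have hK2 : 1 ≤ K ^ 2 := one_le_pow₀ hK
  nlinarith [pow_pos (show (0 : ℝ) < K by linarith) 2, pow_le_pow_left₀ zero_le_one hK2 3,
    mul_le_mul_of_nonneg_left hK2 (show (0:ℝ) ≤ K ^ 4 by positivity)]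

lemma abs_one_div_sub_one_add_le {a d c : ℝ} (ha : 0 ≤ a) (hd : 0 ≤ d) (hlow : 1 + a ≤ c)
    (hup : c ≤ 1 + a + d) : |1 / c - 1 + a| ≤ a ^ 2 + d := by
  have hc : 0 < c := by linarith
  have hinv_low : 1 - a - d ≤ 1 / c := by
    rw [le_div_iff₀ hc]
    nlinarith [mul_nonneg ha hd]
  have hinv_up : 1 / c ≤ 1 - a + a ^ 2 := by
    rw [div_le_iff₀ hc]
    nlinarith [pow_nonneg ha 3]
  rw [abs_le]
  constructor <;> nlinarith

lemma propBound_mem_Icc {k : ℕ} (hk : 1 ≤ k) :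
    propBound k ∈ Set.Icc (1 + 1 / (16 * (k : ℝ) ^ 2))
      (1 + 1 / (16 * (k : ℝ) ^ 2) + 97 / (k : ℝ) ^ 4) := by
  have hK : (1 : ℝ) ≤ k := by exact_mod_cast hk
  unfold propBound
  set K : ℝ := (k : ℝ)
  set t := K / √(4 * K ^ 2 - 1)
  set x := K / 2 * √((2 * K + 1) / (2 * K - 1))
  have hKx : K ≤ 2 * x := by
    have : 1 ≤ √((2 * K + 1) / (2 * K - 1)) :=
      one_le_sqrt.mpr ((one_le_div (by linarith)).mpr (by linarith))
    calc K ≤ K * √((2 * K + 1) / (2 * K - 1)) := le_mul_of_one_le_right (by linarith) this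
      _ = 2 * x := by ring
  have hcoth_up : cosh x / sinh x ≤ 1 + 96 / K ^ 4 := by
    have hexp : exp (-(2 * x)) ≤ 24 / K ^ 4 :=
      calc exp (-(2 * x)) ≤ exp (-K) := exp_le_exp.mpr (by linarith)
        _ ≤ (4 ! : ℕ) / K ^ 4 := exp_neg_le_factorial_div_pow (by linarith) 4
        _ = 24 / K ^ 4 := by norm_num [Nat.factorial]
    calc cosh x / sinh x ≤ 1 + 4 * exp (-(2 * x)) := cosh_div_sinh_le (by linarith)
      _ ≤ 1 + 4 * (24 / K ^ 4) := by gcongr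
      _ = 1 + 96 / K ^ 4 := by ring
  have hcoth_low : 1 ≤ cosh x / sinh x := one_le_cosh_div_sinh (by linarith)
  have ht_low : 1 / 2 + 1 / (16 * K ^ 2) ≤ t :=
    one_half_add_le_div_sqrt_four_mul_sq_sub_one hK
  have ht_up : t ≤ 1 / 2 + 1 / (16 * K ^ 2) + 1 / (32 * K ^ 4) :=
    div_sqrt_four_mul_sq_sub_one_le hK
  have hK2 : 1 / (16 * K ^ 2) ≤ 1 / 4 := by gcongr; nlinarith
  have hK4 : 1 / (32 * K ^ 4) ≤ 1 / K ^ 4 := by gcongr; linarith [pow_pos (by linarith : 0 < K) 4]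
  have hK4' : 1 / (32 * K ^ 4) ≤ 1 / 32 := by gcongr; linarith [one_le_pow₀ (n := 4) hK]
  have ht_le_one : t ≤ 1 := by linarith
  constructor
  · have := mul_le_mul_of_nonneg_left hcoth_low (by positivity : 0 ≤ t)
    linarith
  · calc 1 / 2 + t * (cosh x / sinh x) ≤ 1 / 2 + t * (1 + 96 / K ^ 4) := by gcongr
      _ ≤ 1 / 2 + t + 96 / K ^ 4 := by nlinarith [show 0 ≤ 96 / K ^ 4 by positivity]
      _ ≤ 1 / 2 + (1 / 2 + 1 / (16 * K ^ 2) + 1 / (32 * K ^ 4)) + 96 / K ^ 4 := by gcongr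
      _ ≤ 1 + 1 / (16 * K ^ 2) + 97 / K ^ 4 := by
        rw [show 97 / K ^ 4 = 1 / K ^ 4 + 96 / K ^ 4 by ring]
        linarith

/-- `1/c(k) = 1 - 1/(16k²) + O(1/k⁴)`: there is a constant `C` such that
`|1/c(k) - 1 + 1/(16k²)| ≤ C/k⁴` for all `k ≥ 1`. -/
theorem stmt_7 : ∃ C : ℝ, ∀ k : ℕ, 1 ≤ k →
    |1 / propBound k - 1 + 1 / (16 * (k : ℝ) ^ 2)| ≤ C / (k : ℝ) ^ 4 := by
  refine ⟨98, fun k hk => ?_⟩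
  obtain ⟨hlow, hup⟩ := propBound_mem_Icc hk
  calc |1 / propBound k - 1 + 1 / (16 * (k : ℝ) ^ 2)|
      ≤ (1 / (16 * (k : ℝ) ^ 2)) ^ 2 + 97 / (k : ℝ) ^ 4 :=
        abs_one_div_sub_one_add_le (by positivity) (by positivity) hlow hup
    _ = (1 / 256 + 97) / (k : ℝ) ^ 4 := by ring
    _ ≤ 98 / (k : ℝ) ^ 4 := by gcongr; norm_num
end

section
/- Let P : ℝ → ℝ be continuously differentiable on [0,1] with P(0) = 0 and P(1) = 1, and let k ≥ 1. Then the quantity F(P) = 2/(2k+1)·∫₀¹ P'(x)² dx + 1/2 + k²/(2(2k-1))·∫₀¹ P(x)² dx satisfies F(P) ≥ 1/2 + (k/√(4k²-1))·coth((k/2)·√((2k+1)/(2k-1))). -/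
/-!
Let `c = √(b/a)` and `u(x) = sinh(cx)/sinh c`, the extremal solving `a u'' = b u`, `u(0) = 0`,
`u(1) = 1`. Expanding `a (P' - u')² + b (P - u)² ≥ 0` and using `a u'' = b u` shows that
`a P'² + b P²` dominates the derivative of `a u' (2P - u)`. Integrating over `[0,1]`, the right
side telescopes to `a u'(1) = √(ab) coth √(b/a)`.
-/

open Real Set intervalIntegral

lemma mul_two_mul_sub_add_mul_two_mul_sub_le {a b : ℝ} (ha : 0 ≤ a) (hb : 0 ≤ b)
    (p q u v : ℝ) :
    b * u * (2 * p - u) + a * v * (2 * q - v) ≤ a * q ^ 2 + b * p ^ 2 := by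
  nlinarith [mul_nonneg ha (sq_nonneg (q - v)), mul_nonneg hb (sq_nonneg (p - u))]

/-- Sharp: equality holds for `P = u`. -/
theorem sub_le_integral_sq_derivWithin_add_sq {a b l r : ℝ} (ha : 0 ≤ a) (hb : 0 ≤ b)
    (hlr : l < r) {P u v w : ℝ → ℝ} (hP : ContDiffOn ℝ 1 P (Icc l r))
    (hu : ∀ x, HasDerivAt u (v x) x) (hv : ∀ x, HasDerivAt v (w x) x)
    (huw : ∀ x, a * w x = b * u x) :
    a * v r * (2 * P r - u r) - a * v l * (2 * P l - u l)
      ≤ a * (∫ x in l..r, (derivWithin P (Icc l r) x) ^ 2)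
        + b * (∫ x in l..r, (P x) ^ 2) := by
  set P' := derivWithin P (Icc l r)
  have hPc : ContinuousOn P (Icc l r) := hP.continuousOn
  have hP'c : ContinuousOn P' (Icc l r) :=
    hP.continuousOn_derivWithin (uniqueDiffOn_Icc hlr) le_rfl
  have huc : Continuous u := continuous_iff_continuousAt.2 fun x => (hu x).continuousAt
  have hvc : Continuous v := continuous_iff_continuousAt.2 fun x => (hv x).continuousAt
  have hint : ∀ {f : ℝ → ℝ}, ContinuousOn f (Icc l r) →
      IntervalIntegrable f MeasureTheory.volume l r :=
    fun hf => hf.intervalIntegrable_of_Icc hlr.le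
  set G : ℝ → ℝ := fun x => a * v x * (2 * P x - u x)
  set G' : ℝ → ℝ := fun x => b * u x * (2 * P x - u x) + a * v x * (2 * P' x - v x)
  have hGc : ContinuousOn G (Icc l r) := by fun_prop
  have hG'c : ContinuousOn G' (Icc l r) := by fun_prop
  have hGd : ∀ x ∈ Ioo l r, HasDerivAt G (G' x) x := by
    intro x hx
    have hPx : HasDerivAt P (P' x) x :=
      (hP.differentiableOn one_ne_zero x (Ioo_subset_Icc_self hx)).hasDerivWithinAt.hasDerivAt
        (Icc_mem_nhds hx.1 hx.2)
    refine (((hv x).const_mul a).fun_mul ((hPx.const_mul 2).fun_sub (hu x))).congr_deriv ?_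
    rw [huw x]
  calc a * v r * (2 * P r - u r) - a * v l * (2 * P l - u l)
      = ∫ x in l..r, G' x :=
        (integral_eq_sub_of_hasDerivAt_of_le hlr.le hGc hGd (hint hG'c)).symm
    _ ≤ ∫ x in l..r, (a * P' x ^ 2 + b * P x ^ 2) :=
        integral_mono_on hlr.le (hint hG'c) (hint (by fun_prop)) fun x _ =>
          mul_two_mul_sub_add_mul_two_mul_sub_le ha hb _ _ _ _
    _ = _ := by
        rw [integral_add (hint (by fun_prop)) (hint (by fun_prop)),
          integral_const_mul, integral_const_mul]

theorem sqrt_mul_mul_cosh_div_sinh_le_integral {a b : ℝ} (ha : 0 < a) (hb : 0 < b)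
    {P : ℝ → ℝ} (hP : ContDiffOn ℝ 1 P (Icc 0 1)) (h0 : P 0 = 0) (h1 : P 1 = 1) :
    √(a * b) * (cosh √(b / a) / sinh √(b / a))
      ≤ a * (∫ x in (0:ℝ)..1, (derivWithin P (Icc 0 1) x) ^ 2)
        + b * (∫ x in (0:ℝ)..1, (P x) ^ 2) := by
  set c := √(b / a)
  have hs : sinh c ≠ 0 := (sinh_pos_iff.2 (sqrt_pos.2 (div_pos hb ha))).ne'
  have hac : a * c ^ 2 = b := by
    rw [sq_sqrt (div_pos hb ha).le]
    field_simp
  have hac' : a * c = √(a * b) := by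
    rw [show a * b = a ^ 2 * (b / a) by field_simp, sqrt_mul (sq_nonneg a), sqrt_sq ha.le]
  have hu : ∀ x, HasDerivAt (fun y => sinh (c * y) / sinh c) (c * cosh (c * x) / sinh c) x := by
    intro x
    exact ((((hasDerivAt_id' x).const_mul c).sinh).div_const (sinh c)).congr_deriv (by ring)
  have hv : ∀ x, HasDerivAt (fun y => c * cosh (c * y) / sinh c)
      (c ^ 2 * sinh (c * x) / sinh c) x := by
    intro x
    exact (((((hasDerivAt_id' x).const_mul c).cosh).const_mul c).div_const (sinh c)).congr_deriv
      (by ring)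
  have key := sub_le_integral_sq_derivWithin_add_sq ha.le hb.le one_pos hP hu hv
    fun x => by rw [← hac]; ring
  convert key using 1
  simp only [h0, h1, mul_one, mul_zero, sinh_zero, zero_div, sub_zero]
  field_simp
  rw [← hac']
  ring

/-- Calculus-of-variations lower bound: for `P` continuously differentiable on `[0,1]` with
`P(0) = 0`, `P(1) = 1` and `k ≥ 1`,
`2/(2k+1)·∫₀¹ P'² + 1/2 + k²/(2(2k-1))·∫₀¹ P² ≥ 1/2 + (k/√(4k²-1))·coth((k/2)·√((2k+1)/(2k-1)))`. -/
theorem stmt_9 (P : ℝ → ℝ) (hP : ContDiffOn ℝ 1 P (Set.Icc 0 1))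
    (h0 : P 0 = 0) (h1 : P 1 = 1) (k : ℕ) (hk : 1 ≤ k) :
    1 / 2 + (k : ℝ) / Real.sqrt (4 * (k : ℝ) ^ 2 - 1) *
        (Real.cosh ((k : ℝ) / 2 * Real.sqrt ((2 * (k : ℝ) + 1) / (2 * (k : ℝ) - 1))) /
         Real.sinh ((k : ℝ) / 2 * Real.sqrt ((2 * (k : ℝ) + 1) / (2 * (k : ℝ) - 1))))
      ≤ 2 / (2 * (k : ℝ) + 1) * (∫ x in (0:ℝ)..1, (derivWithin P (Set.Icc 0 1) x) ^ 2)
          + 1 / 2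
          + (k : ℝ) ^ 2 / (2 * (2 * (k : ℝ) - 1)) * (∫ x in (0:ℝ)..1, (P x) ^ 2) := by
  have hk1 : (1 : ℝ) ≤ k := by exact_mod_cast hk
  have h2k1 : (0 : ℝ) < 2 * k - 1 := by linarith
  have h4k : (0 : ℝ) < 4 * k ^ 2 - 1 := by nlinarith
  have hab : 2 / (2 * (k : ℝ) + 1) * ((k : ℝ) ^ 2 / (2 * (2 * k - 1)))
      = k ^ 2 / (4 * k ^ 2 - 1) := by
    rw [div_mul_div_comm, div_eq_div_iff (by positivity) h4k.ne']
    ring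
  have hba : (k : ℝ) ^ 2 / (2 * (2 * k - 1)) / (2 / (2 * k + 1))
      = (k / 2) ^ 2 * ((2 * k + 1) / (2 * k - 1)) := by
    field_simp
  have key := sqrt_mul_mul_cosh_div_sinh_le_integral (a := 2 / (2 * (k : ℝ) + 1))
    (b := (k : ℝ) ^ 2 / (2 * (2 * k - 1))) (by positivity) (by positivity) hP h0 h1
  rw [hab, hba, sqrt_div (sq_nonneg _), sqrt_mul (sq_nonneg _), sqrt_sq (by positivity),
    sqrt_sq (by positivity)] at key
  linarith
end
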